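/- arXiv:0907.4599 — 4 statements merged into one kernel-verified Lean document; each statement's English description precedes it below -/
import Mathlib

section
/- Suppose the linearizing map Φ_F is a C¹ diffeomorphism of ℝ (so that, by Herman's theorem, the map H : t ↦ Trans(F_t) has a non-zero derivative at t = 0). Let p_n/q_n be the n-th continued fraction convergent of θ = Trans(F). Then ℓ_{p_n/q_n} = o(θ − p_n/q_n) as n → ∞; in particular ℓ_{p_n/q_n} = O(1/q_n²). -/
/-!
Conjugating `F_t = F + t` by `Φ` gives circle lifts `g_t = Φ ∘ F_t ∘ Φ⁻¹` with the same
translation number and, uniformly in `y`, `g_t y = y + θ + t ψ y + o(t)` where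
`ψ = Φ' ∘ Φ⁻¹ ∘ (· + θ)`. Hence `g_t^q y - y - qθ` is `t` times a Birkhoff sum of `ψ` along the
rotation by `θ`, up to `o(t)`. The rotation by an irrational `θ` is uniquely ergodic (Weyl: check
it on the characters, then pass to the closure of their span), so the Birkhoff averages of `ψ`
converge uniformly to a constant `c`, and `t ↦ Trans(F_t)` has derivative `c` at `0` (Herman).
Since `Φ' ≥ m > 0`, also `|Trans(F_t) - θ| ≥ m |t|`, so `c ≠ 0` and both endpoints of
`I(p_n/q_n)` are `O(θ - p_n/q_n)`; comparing the first-order expansions of `Trans(F_t)` at the two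
endpoints, where it takes the same value, shows that their distance is `o(θ - p_n/q_n)`.
-/

open Filter Real Set Topology Asymptotics Function MeasureTheory AddCircle

local notation "𝕋" => AddCircle (1 : ℝ)

local notation "τ" => CircleDeg1Lift.translationNumber

section PeriodicFunctions

variable {E : Type*} {p : ℝ}

def Function.Periodic.liftContinuousMap [TopologicalSpace E] {ψ : ℝ → E} (hper : Periodic ψ p)
    (hψ : Continuous ψ) : C(AddCircle p, E) :=
  ⟨hper.lift, continuous_coinduced_dom.2 hψ⟩

lemma AddCircle.lipschitzWith_coe : LipschitzWith 1 ((↑) : ℝ → AddCircle p) :=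
  LipschitzWith.of_dist_le_mul fun x y => by
    rw [NNReal.coe_one, one_mul, dist_eq_norm, dist_eq_norm, ← AddCircle.coe_sub]
    exact QuotientAddGroup.norm_mk_le_norm

theorem Function.Periodic.uniformContinuous_of_continuous [UniformSpace E] (hp : 0 < p)
    {ψ : ℝ → E} (hper : Periodic ψ p) (hψ : Continuous ψ) : UniformContinuous ψ :=
  have : Fact (0 < p) := ⟨hp⟩
  (CompactSpace.uniformContinuous_of_continuous (hper.liftContinuousMap hψ).continuous).comp
    AddCircle.lipschitzWith_coe.uniformContinuous

end PeriodicFunctions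

section BirkhoffAverage

variable {α β M : Type*}

lemma birkhoffAverage_smul (R : Type*) [Field R] [AddCommMonoid M] [Module R M]
    (f : α → α) (a : R) (g : α → M) :
    birkhoffAverage R f (a • g) = fun n => a • birkhoffAverage R f g n := by
  ext n x
  simp [birkhoffAverage, birkhoffSum, Finset.smul_sum, smul_comm a]

theorem Function.Semiconj.birkhoffAverage_apply (R : Type*) [DivisionSemiring R]
    [AddCommMonoid M] [Module R M] {e : α → β} {fa : α → α} {fb : β → β} (h : Semiconj e fa fb)
    (g : β → M) (n : ℕ) (x : α) :
    birkhoffAverage R fb g n (e x) = birkhoffAverage R fa (g ∘ e) n x := by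
  simp [birkhoffAverage, birkhoffSum, (h.iterate_right _).eq]

end BirkhoffAverage

section UniqueErgodicity

lemma ContinuousMap.integrable_haarAddCircle (g : C(𝕋, ℂ)) : Integrable g haarAddCircle :=
  g.continuous.integrable_of_hasCompactSupport (.of_compactSpace _)

lemma lipschitzWith_integral_haarAddCircle :
    LipschitzWith 1 fun g : C(𝕋, ℂ) => ∫ x, g x ∂haarAddCircle := by
  refine LipschitzWith.of_dist_le_mul fun g h => ?_
  rw [dist_eq_norm, ← integral_sub g.integrable_haarAddCircle h.integrable_haarAddCircle,
    NNReal.coe_one, one_mul, dist_eq_norm]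
  simpa using norm_integral_le_of_norm_le_const (μ := haarAddCircle)
    (Eventually.of_forall fun x => (g - h).norm_coe_le_norm x)

lemma birkhoffAverage_comp_addRight_apply (α : 𝕋) (g : C(𝕋, ℂ)) (n : ℕ) (x : 𝕋) :
    birkhoffAverage ℂ (fun g : C(𝕋, ℂ) => g.comp (ContinuousMap.addRight α)) id n g x =
      birkhoffAverage ℂ (· + α) g n x := by
  have hiter : ∀ k : ℕ, ((fun g : C(𝕋, ℂ) => g.comp (ContinuousMap.addRight α))^[k] g) x =
      g ((· + α)^[k] x) := by
    intro k
    induction k generalizing x with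
    | zero => rfl
    | succ k ih => rw [iterate_succ_apply', ContinuousMap.comp_apply, ContinuousMap.coe_addRight,
        ih, iterate_succ_apply]
  simp [birkhoffAverage, birkhoffSum, hiter]

def birkhoffUniformlyConvergent (θ : ℝ) : Submodule ℂ C(𝕋, ℂ) where
  carrier := {g | TendstoUniformly (birkhoffAverage ℂ (· + (θ : 𝕋)) g)
    (fun _ => ∫ x, g x ∂haarAddCircle) atTop}
  zero_mem' := by
    have : birkhoffAverage ℂ (· + (θ : 𝕋)) (0 : 𝕋 → ℂ) = fun _ _ => 0 := by
      ext n x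
      simp [birkhoffAverage, birkhoffSum]
    simpa [this] using (tendsto_const_nhds (x := (0 : ℂ)) (f := atTop)).tendstoUniformly_const
  add_mem' := by
    intro g h hg hh
    simp only [Set.mem_ofPred_eq, ContinuousMap.coe_add, birkhoffAverage_add, Pi.add_apply,
      integral_add g.integrable_haarAddCircle h.integrable_haarAddCircle] at hg hh ⊢
    exact hg.add hh
  smul_mem' := by
    intro a g hg
    simp only [Set.mem_ofPred_eq, ContinuousMap.coe_smul, birkhoffAverage_smul, Pi.smul_apply,
      integral_smul] at hg ⊢
    exact (uniformContinuous_const_smul a).comp_tendstoUniformly hg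

lemma isClosed_birkhoffUniformlyConvergent (θ : ℝ) :
    IsClosed (birkhoffUniformlyConvergent θ : Set C(𝕋, ℂ)) := by
  have hP : Continuous fun g : C(𝕋, ℂ) => ContinuousMap.const 𝕋 (∫ x, g x ∂haarAddCircle) :=
    ContinuousMap.const'.continuous.comp lipschitzWith_integral_haarAddCircle.continuous
  have hU : LipschitzWith 1 fun g : C(𝕋, ℂ) => g.comp (ContinuousMap.addRight (θ : 𝕋)) :=
    LipschitzWith.of_dist_le_mul fun g h => by
      rw [NNReal.coe_one, one_mul, ContinuousMap.dist_le dist_nonneg]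
      exact fun x => ContinuousMap.dist_apply_le_dist (f := g) (g := h) (x + θ)
  -- Uniform convergence in `x` is convergence in `C(𝕋, ℂ)` of the Birkhoff averages of the
  -- Koopman operator `g ↦ g ∘ (· + θ)`, a contraction, so the set of such `g` is closed.
  have hS : (birkhoffUniformlyConvergent θ : Set C(𝕋, ℂ)) = {g | Tendsto
      (birkhoffAverage ℂ (fun g : C(𝕋, ℂ) => g.comp (ContinuousMap.addRight (θ : 𝕋))) id · g)
      atTop (𝓝 (ContinuousMap.const 𝕋 (∫ x, g x ∂haarAddCircle)))} := by
    ext g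
    rw [Set.mem_ofPred_eq, ContinuousMap.tendsto_iff_tendstoUniformly]
    simp only [birkhoffAverage_comp_addRight_apply]
    rfl
  rw [hS]
  exact isClosed_setOfPred_tendsto_birkhoffAverage ℂ hU uniformContinuous_id hP

lemma fourier_coe_ne_one_of_irrational {θ : ℝ} (hθ : Irrational θ) {n : ℤ} (hn : n ≠ 0) :
    fourier n (θ : 𝕋) ≠ 1 := by
  rw [fourier_coe_apply, Ne, Complex.exp_eq_one_iff]
  rintro ⟨m, hm⟩
  have : (n : ℝ) * θ = m := by
    field_simp at hm
    norm_num at hm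
    exact_mod_cast hm
  exact (hθ.intCast_mul hn).ne_int m this

lemma norm_birkhoffSum_fourier_le {n : ℤ} {α : 𝕋} (hα : fourier n α ≠ 1) (N : ℕ) (x : 𝕋) :
    ‖birkhoffSum (· + α) (fourier n) N x‖ ≤ 2 / ‖fourier n α - 1‖ := by
  have hterm : ∀ k : ℕ, fourier n ((· + α)^[k] x) = fourier n x * fourier n α ^ k := fun k => by
    simp [add_right_iterate_apply, fourier_apply, smul_add, smul_comm n k, toCircle_add,
      toCircle_nsmul]
  have hnorm : ∀ y : 𝕋, ‖fourier n y‖ = 1 := fun y => by simp [fourier_apply, Circle.norm_coe]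
  rw [birkhoffSum, Finset.sum_congr rfl fun k _ => hterm k, ← Finset.mul_sum, geom_sum_eq hα,
    norm_mul, hnorm, one_mul, norm_div]
  gcongr
  calc ‖fourier n α ^ N - 1‖ ≤ ‖fourier n α ^ N‖ + ‖(1 : ℂ)‖ := norm_sub_le _ _
    _ = 2 := by rw [norm_pow, hnorm]; norm_num

lemma fourier_mem_birkhoffUniformlyConvergent {θ : ℝ} (hθ : Irrational θ) (n : ℤ) :
    fourier n ∈ birkhoffUniformlyConvergent θ := by
  have hcoeff := congrFun (fourierCoeff_fourier (T := 1) n) 0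
  simp only [fourierCoeff, neg_zero, fourier_zero, one_smul] at hcoeff
  show TendstoUniformly _ _ _
  rw [hcoeff, Metric.tendstoUniformly_iff]
  intro ε hε
  rcases eq_or_ne n 0 with rfl | hn
  · filter_upwards [eventually_ne_atTop 0] with N hN x
    rw [birkhoffAverage_of_comp_eq ℂ (by ext; simp) (Nat.cast_ne_zero.2 hN)]
    simpa using hε
  · have hC := (tendsto_const_div_atTop_nhds_zero_nat (2 / ‖fourier n (θ : 𝕋) - 1‖)).eventually
      (gt_mem_nhds hε)
    filter_upwards [hC] with N hN x
    rw [Pi.single_eq_of_ne (Ne.symm hn), dist_zero_left, birkhoffAverage, norm_smul, norm_inv,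
      Complex.norm_natCast, inv_mul_eq_div]
    exact (div_le_div_of_nonneg_right (norm_birkhoffSum_fourier_le
      (fourier_coe_ne_one_of_irrational hθ hn) N x) N.cast_nonneg).trans_lt hN

theorem birkhoffUniformlyConvergent_eq_top {θ : ℝ} (hθ : Irrational θ) :
    birkhoffUniformlyConvergent θ = ⊤ := by
  refine eq_top_iff.2 (span_fourier_closure_eq_top.symm.trans_le ?_)
  refine Submodule.topologicalClosure_minimal _ ?_ (isClosed_birkhoffUniformlyConvergent θ)
  exact Submodule.span_le.2 (Set.range_subset_iff.2 (fourier_mem_birkhoffUniformlyConvergent hθ))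

theorem Irrational.tendstoUniformly_birkhoffAverage_add {θ : ℝ} (hθ : Irrational θ) {ψ : ℝ → ℝ}
    (hper : Periodic ψ 1) (hψ : Continuous ψ) :
    ∃ c, TendstoUniformly (birkhoffAverage ℝ (· + θ) ψ) (fun _ => c) atTop := by
  set g := (hper.comp ((↑) : ℝ → ℂ)).liftContinuousMap (Complex.continuous_ofReal.comp hψ)
  have hg : g ∈ birkhoffUniformlyConvergent θ := by
    rw [birkhoffUniformlyConvergent_eq_top hθ]
    exact Submodule.mem_top
  refine ⟨(∫ x, g x ∂haarAddCircle).re, ?_⟩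
  have hlift : ∀ n (y : ℝ),
      birkhoffAverage ℂ (· + (θ : 𝕋)) g n y = birkhoffAverage ℝ (· + θ) ψ n y := fun n y => by
    rw [Semiconj.birkhoffAverage_apply ℂ (fun y => (AddCircle.coe_add (1 : ℝ) y θ).symm),
      ← Complex.ofRealCLM_apply, map_birkhoffAverage ℝ ℂ Complex.ofRealCLM]
    rfl
  convert Complex.reCLM.uniformContinuous.comp_tendstoUniformly (hg.comp ((↑) : ℝ → 𝕋)) using 1
  · ext n y
    simp [hlift]
  · rfl

end UniqueErgodicity

section Calculus

lemma exists_abs_sub_sub_mul_deriv_le {φ : ℝ → ℝ} (hφ : Differentiable ℝ φ)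
    (hu : UniformContinuous (deriv φ)) {ε : ℝ} (hε : 0 < ε) :
    ∃ δ > 0, ∀ u t, |t| ≤ δ → |φ (u + t) - φ u - t * deriv φ u| ≤ ε * |t| := by
  obtain ⟨δ, hδ, hD⟩ := Metric.uniformContinuous_iff.1 hu ε hε
  refine ⟨δ / 2, half_pos hδ, fun u t ht => ?_⟩
  have hderiv : ∀ x, HasDerivAt (fun s => φ s - s * deriv φ u) (deriv φ x - deriv φ u) x :=
    fun x => (hφ x).hasDerivAt.sub (by simpa using (hasDerivAt_id x).mul_const (deriv φ u))
  have key := Convex.norm_image_sub_le_of_norm_deriv_le (s := Metric.closedBall u (δ / 2))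
    (x := u) (y := u + t) (fun x _ => (hderiv x).differentiableAt)
    (fun x hx => by
      rw [(hderiv x).deriv, ← dist_eq_norm]
      exact (hD ((Metric.mem_closedBall.1 hx).trans_lt (half_lt_self hδ))).le)
    (convex_closedBall _ _) (Metric.mem_closedBall_self (half_pos hδ).le)
    (by simpa [Metric.mem_closedBall, dist_eq_norm] using ht)
  simp only [Real.norm_eq_abs, add_sub_cancel_left] at key
  calc |φ (u + t) - φ u - t * deriv φ u|
      = |φ (u + t) - (u + t) * deriv φ u - (φ u - u * deriv φ u)| := by ring_nf
    _ ≤ ε * |t| := key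

lemma hasDerivAt_of_forall_abs_sub_le {T : ℝ → ℝ} {a c : ℝ}
    (h : ∀ ε > 0, ∃ δ > 0, ∀ t, |t| ≤ δ → |T t - a - c * t| ≤ ε * |t|) : HasDerivAt T c 0 := by
  have h0 : T 0 = a := by
    obtain ⟨δ, hδ, hT⟩ := h 1 one_pos
    simpa [sub_eq_zero] using hT 0 (by simpa using hδ.le)
  rw [hasDerivAt_iff_isLittleO, isLittleO_iff]
  intro ε hε
  obtain ⟨δ, hδ, hT⟩ := h ε hε
  filter_upwards [Metric.closedBall_mem_nhds 0 hδ] with t ht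
  simpa [h0, mul_comm] using hT t (by simpa using ht)

variable {T : ℝ → ℝ} {c m : ℝ}

lemma le_abs_of_hasDerivAt_of_mul_abs_le (hT : HasDerivAt T c 0)
    (hlow : ∀ t, m * |t| ≤ |T t - T 0|) : m ≤ |c| := by
  refine ge_of_tendsto hT.tendsto_slope.abs (eventually_nhdsWithin_of_forall fun t ht => ?_)
  rw [slope_def_field, sub_zero, abs_div, le_div_iff₀ (abs_pos.2 ht)]
  exact hlow t

theorem isLittleO_sub_of_apply_eq {ι : Type*} {l : Filter ι} (hT : HasDerivAt T c 0) (hm : 0 < m)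
    (hlow : ∀ t, m * |t| ≤ |T t - T 0|) {a b r : ι → ℝ} (hr : Tendsto r l (𝓝 (T 0)))
    (ha : ∀ i, T (a i) = r i) (hb : ∀ i, T (b i) = r i) :
    (fun i => b i - a i) =o[l] (fun i => T 0 - r i) := by
  have hc : c ≠ 0 := fun h => by
    linarith [le_abs_of_hasDerivAt_of_mul_abs_le hT hlow, abs_eq_zero.2 h]
  have hbig : ∀ x : ι → ℝ, (∀ i, T (x i) = r i) → x =O[l] (fun i => T 0 - r i) :=
    fun x hx => IsBigO.of_bound m⁻¹ (Eventually.of_forall fun i => by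
      rw [Real.norm_eq_abs, Real.norm_eq_abs, abs_sub_comm, ← hx i, le_inv_mul_iff₀ hm]
      exact hlow (x i))
  have hlittle : ∀ x : ι → ℝ, (∀ i, T (x i) = r i) →
      (fun i => T (x i) - T 0 - x i * c) =o[l] (fun i => T 0 - r i) := fun x hx => by
    have hx0 : Tendsto x l (𝓝 0) :=
      (hbig x hx).trans_tendsto (by simpa using (tendsto_const_nhds (x := T 0)).sub hr)
    have h := (hasDerivAt_iff_isLittleO.1 hT).comp_tendsto hx0
    simp only [sub_zero, smul_eq_mul] at h
    exact (h.trans_isBigO (hbig x hx)).congr_left fun i => by simp [mul_comm]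
  have hdiff : (fun i => c * (b i - a i)) =o[l] (fun i => T 0 - r i) :=
    ((hlittle a ha).sub (hlittle b hb)).congr_left fun i => by rw [ha, hb]; ring
  simpa [hc] using hdiff.const_mul_left c⁻¹

lemma tendsto_of_abs_sub_le_one_div_sq {ι : Type*} {l : Filter ι} {x : ι → ℝ} {q : ι → ℕ}
    {θ : ℝ} (hq : Tendsto q l atTop) (h : ∀ i, |θ - x i| ≤ 1 / (q i : ℝ) ^ 2) :
    Tendsto x l (𝓝 θ) := by
  have hq2 : Tendsto (fun i => 1 / (q i : ℝ) ^ 2) l (𝓝 0) := by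
    simpa [Function.comp_def, Pi.inv_def] using ((tendsto_pow_atTop two_ne_zero).comp
      (tendsto_natCast_atTop_atTop.comp hq)).inv_tendsto_atTop
  refine tendsto_iff_norm_sub_tendsto_zero.2 (squeeze_zero (fun i => norm_nonneg _)
    (fun i => ?_) hq2)
  simpa [Real.norm_eq_abs, abs_sub_comm] using h i

end Calculus

lemma abs_iterate_sub_le_of_abs_sub_le {g : ℝ → ℝ} {θ η : ℝ} (h : ∀ z, |g z - (z + θ)| ≤ η)
    (n : ℕ) (y : ℝ) : |g^[n] y - (y + n * θ)| ≤ n * η := by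
  induction n with
  | zero => simp
  | succ n ih =>
    rw [iterate_succ_apply']
    calc |g (g^[n] y) - (y + ↑(n + 1) * θ)|
        = |(g (g^[n] y) - (g^[n] y + θ)) + (g^[n] y - (y + n * θ))| := by push_cast; ring_nf
      _ ≤ η + n * η := (abs_add_le _ _).trans (add_le_add (h _) ih)
      _ = ↑(n + 1) * η := by push_cast; ring

lemma abs_iterate_sub_birkhoffSum_le {g h : ℝ → ℝ} {θ α β : ℝ} {n : ℕ} {y : ℝ}
    (hg : ∀ z, |g z - (z + θ) - h z| ≤ α) (hh : ∀ k < n, |h (g^[k] y) - h (y + k * θ)| ≤ β) :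
    |g^[n] y - (y + n * θ) - birkhoffSum (· + θ) h n y| ≤ n * (α + β) := by
  induction n with
  | zero => simp
  | succ n ih =>
    have ih := ih fun k hk => hh k (hk.trans n.lt_succ_self)
    have hn := hh n n.lt_succ_self
    rw [iterate_succ_apply', birkhoffSum_succ, add_right_iterate_apply, nsmul_eq_mul]
    set w := g^[n] y
    calc |g w - (y + ↑(n + 1) * θ) - (birkhoffSum (· + θ) h n y + h (y + n * θ))|
        = |(g w - (w + θ) - h w) + (h w - h (y + n * θ))
            + (w - (y + n * θ) - birkhoffSum (· + θ) h n y)| := by push_cast; ring_nf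
      _ ≤ α + β + n * (α + β) :=
          (abs_add_three _ _ _).trans (add_le_add (add_le_add (hg w) hn) ih)
      _ = ↑(n + 1) * (α + β) := by push_cast; ring

namespace CircleDeg1Lift

lemma abs_translationNumber_sub_le (g : CircleDeg1Lift) {a b : ℝ} (h : ∀ y, |g y - y - a| ≤ b) :
    |τ g - a| ≤ b := by
  rw [abs_sub_le_iff]
  constructor
  · linarith [g.translationNumber_le_of_le_add (z := a + b) fun y => by
      linarith [(abs_sub_le_iff.1 (h y)).1]]
  · linarith [g.le_translationNumber_of_add_le (z := a - b) fun y => by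
      linarith [(abs_sub_le_iff.1 (h y)).2]]

theorem abs_translationNumber_sub_le_of_near_rotation (g : CircleDeg1Lift) {ψ : ℝ → ℝ}
    {θ t c α β γ η : ℝ} {q : ℕ} (hq : q ≠ 0)
    (hlin : ∀ z, |g z - (z + θ) - t * ψ z| ≤ α) (hstep : ∀ z, |g z - (z + θ)| ≤ η)
    (hψ : ∀ z z', |z - z'| ≤ q * η → |ψ z - ψ z'| ≤ β)
    (havg : ∀ y, |birkhoffAverage ℝ (· + θ) ψ q y - c| ≤ γ) :
    |τ g - θ - t * c| ≤ α + |t| * β + |t| * γ := by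
  have hq' : (0 : ℝ) < q := Nat.cast_pos.2 (Nat.pos_of_ne_zero hq)
  have hη : 0 ≤ η := (abs_nonneg _).trans (hstep 0)
  have hclose : ∀ k < q, ∀ y, |t * ψ (g^[k] y) - t * ψ (y + k * θ)| ≤ |t| * β := fun k hk y => by
    rw [← mul_sub, abs_mul]
    refine mul_le_mul_of_nonneg_left (hψ _ _ ?_) (abs_nonneg t)
    exact (abs_iterate_sub_le_of_abs_sub_le hstep k y).trans (by gcongr)
  have hsum : ∀ y, birkhoffSum (· + θ) (fun z => t * ψ z) q y =
      q * (t * birkhoffAverage ℝ (· + θ) ψ q y) := fun y => by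
    simp only [birkhoffAverage, birkhoffSum, ← Finset.mul_sum, smul_eq_mul]
    field_simp
  have hpow : ∀ y, |(g ^ q) y - y - q * (θ + t * c)| ≤ q * (α + |t| * β + |t| * γ) := by
    intro y
    have h1 := abs_iterate_sub_birkhoffSum_le (h := fun z => t * ψ z) hlin (hclose · · y)
    have h2 : |t * birkhoffAverage ℝ (· + θ) ψ q y - t * c| ≤ |t| * γ := by
      rw [← mul_sub, abs_mul]
      exact mul_le_mul_of_nonneg_left (havg y) (abs_nonneg t)
    rw [hsum, coe_pow] at *
    calc |g^[q] y - y - q * (θ + t * c)|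
        = |(g^[q] y - (y + q * θ) - q * (t * birkhoffAverage ℝ (· + θ) ψ q y))
            + q * (t * birkhoffAverage ℝ (· + θ) ψ q y - t * c)| := by ring_nf
      _ ≤ q * (α + |t| * β) + q * (|t| * γ) := by
          refine (abs_add_le _ _).trans (add_le_add h1 ?_)
          rw [abs_mul, abs_of_pos hq']
          exact mul_le_mul_of_nonneg_left h2 hq'.le
      _ = q * (α + |t| * β + |t| * γ) := by ring
  have := (g ^ q).abs_translationNumber_sub_le hpow
  rw [translationNumber_pow, ← mul_sub, abs_mul, abs_of_pos hq', ← sub_sub] at this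
  exact le_of_mul_le_mul_left this hq'

def addConst (f : CircleDeg1Lift) (t : ℝ) : CircleDeg1Lift :=
  ↑(translate (Multiplicative.ofAdd t)) * f

@[simp]
lemma addConst_apply (f : CircleDeg1Lift) (t x : ℝ) : f.addConst t x = f x + t := by
  simp [addConst, add_comm]

lemma periodic_deriv (f : CircleDeg1Lift) : Periodic (deriv f) 1 := fun x => by
  rw [← deriv_comp_add_const, show (fun y => f (y + 1)) = fun y => f y + 1 from
    funext f.map_add_one, deriv_add_const]

lemma exists_pos_le_deriv {f : CircleDeg1Lift} (hf : ContDiff ℝ 1 f) (hf' : ∀ x, deriv f x ≠ 0) :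
    ∃ m > 0, ∀ x, m ≤ deriv f x := by
  obtain ⟨_, ⟨x₀, rfl⟩, hmin⟩ := (f.periodic_deriv.compact_of_continuous one_ne_zero
    (hf.continuous_deriv le_rfl)).exists_isLeast (range_nonempty _)
  exact ⟨deriv f x₀, f.monotone.deriv_nonneg.lt_of_ne (hf' x₀).symm,
    fun x => hmin ⟨x, rfl⟩⟩

lemma exists_abs_deriv_le {f : CircleDeg1Lift} (hf : ContDiff ℝ 1 f) :
    ∃ M, ∀ x, |deriv f x| ≤ M := by
  obtain ⟨M, hM⟩ := isBounded_iff_forall_norm_le.1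
    (f.periodic_deriv.isBounded_of_continuous one_ne_zero (hf.continuous_deriv le_rfl))
  exact ⟨M, fun x => hM _ ⟨x, rfl⟩⟩

variable {f : CircleDeg1Lift} {Φ : CircleDeg1Liftˣ} {θ : ℝ}

lemma conj_addConst_apply (hconj : ∀ x, Φ (f x) = Φ x + θ) (t y : ℝ) :
    (↑Φ * f.addConst t * ↑Φ⁻¹ : CircleDeg1Lift) y = Φ (Φ⁻¹ (y + θ) + t) := by
  have : f (Φ⁻¹ y) = Φ⁻¹ (y + θ) := by
    conv_rhs => rw [← units_apply_inv_apply Φ y, ← hconj, units_inv_apply_apply]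
  simp only [mul_apply, addConst_apply]
  rw [this]

theorem exists_mul_abs_le_abs_translationNumber_addConst_sub (hconj : ∀ x, Φ (f x) = Φ x + θ)
    (hΦ : ContDiff ℝ 1 Φ) (hΦ' : ∀ x, deriv Φ x ≠ 0) :
    ∃ m > 0, ∀ t, m * |t| ≤ |τ (f.addConst t) - θ| := by
  obtain ⟨m, hm, hmΦ⟩ := exists_pos_le_deriv (f := ↑Φ) hΦ hΦ'
  have hmvt := mul_sub_le_image_sub_of_le_deriv (hΦ.differentiable one_ne_zero) hmΦ
  refine ⟨m, hm, fun t => ?_⟩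
  rw [← translationNumber_conj_eq Φ]
  set g := ↑Φ * f.addConst t * ↑Φ⁻¹
  have hg : ∀ y, g y - (y + θ) = Φ (Φ⁻¹ (y + θ) + t) - Φ (Φ⁻¹ (y + θ)) := fun y => by
    rw [conj_addConst_apply hconj, units_apply_inv_apply]
  rcases le_or_gt 0 t with ht | ht
  · have : θ + m * t ≤ τ g := g.le_translationNumber_of_add_le fun y => by
      have := hmvt (le_add_of_nonneg_right ht : Φ⁻¹ (y + θ) ≤ Φ⁻¹ (y + θ) + t)
      rw [add_sub_cancel_left] at this
      linarith [hg y]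
    rw [abs_of_nonneg ht]
    exact (by linarith : m * t ≤ τ g - θ).trans (le_abs_self _)
  · have : τ g ≤ θ + m * t := g.translationNumber_le_of_le_add fun y => by
      have := hmvt (add_le_of_nonpos_right ht.le : Φ⁻¹ (y + θ) + t ≤ Φ⁻¹ (y + θ))
      rw [sub_add_cancel_left] at this
      linarith [hg y]
    rw [abs_of_neg ht, abs_sub_comm]
    exact (by linarith : m * -t ≤ θ - τ g).trans (le_abs_self _)

lemma periodic_deriv_comp_inv_add (θ : ℝ) : Periodic (fun y => deriv Φ (Φ⁻¹ (y + θ))) 1 :=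
  fun y => by
    simp only [add_right_comm y 1 θ, map_add_one]
    exact (periodic_deriv (Φ : CircleDeg1Lift)) _

lemma continuous_deriv_comp_inv_add (hΦ : ContDiff ℝ 1 Φ) (θ : ℝ) :
    Continuous fun y => deriv Φ (Φ⁻¹ (y + θ)) := by
  have hinv : Continuous (↑Φ⁻¹ : CircleDeg1Lift) :=
    (continuous_iff_surjective _).2 fun x => ⟨Φ x, units_inv_apply_apply Φ x⟩
  exact (hΦ.continuous_deriv le_rfl).comp (hinv.comp (continuous_add_const θ))

lemma exists_abs_conj_addConst_sub_le (hconj : ∀ x, Φ (f x) = Φ x + θ) (hΦ : ContDiff ℝ 1 Φ)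
    {ε : ℝ} (hε : 0 < ε) : ∃ δ > 0, ∀ t, |t| ≤ δ → ∀ z,
      |(↑Φ * f.addConst t * ↑Φ⁻¹ : CircleDeg1Lift) z - (z + θ) - t * deriv Φ (Φ⁻¹ (z + θ))|
        ≤ ε * |t| := by
  obtain ⟨δ, hδ, hlin⟩ := exists_abs_sub_sub_mul_deriv_le (hΦ.differentiable one_ne_zero)
    ((periodic_deriv (Φ : CircleDeg1Lift)).uniformContinuous_of_continuous one_pos
      (hΦ.continuous_deriv le_rfl)) hε
  refine ⟨δ, hδ, fun t ht z => ?_⟩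
  simpa [conj_addConst_apply hconj, units_apply_inv_apply, mul_comm t] using
    hlin (Φ⁻¹ (z + θ)) t ht

theorem exists_hasDerivAt_translationNumber_addConst (hconj : ∀ x, Φ (f x) = Φ x + θ)
    (hΦ : ContDiff ℝ 1 Φ) (hθ : Irrational θ) :
    ∃ c, HasDerivAt (fun t => τ (f.addConst t)) c 0 := by
  set ψ := fun y => deriv Φ (Φ⁻¹ (y + θ))
  obtain ⟨M, hM⟩ := exists_abs_deriv_le (f := ↑Φ) hΦ
  obtain ⟨c, hc⟩ := hθ.tendstoUniformly_birkhoffAverage_add (periodic_deriv_comp_inv_add θ)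
    (continuous_deriv_comp_inv_add hΦ θ)
  refine ⟨c, hasDerivAt_of_forall_abs_sub_le (a := θ) fun ε hε => ?_⟩
  have hε3 : 0 < ε / 3 := by positivity
  obtain ⟨q, hq, hq0⟩ := ((Metric.tendstoUniformly_iff.1 hc _ hε3).and
    (eventually_ne_atTop 0)).exists
  obtain ⟨ρ, hρ, hψρ⟩ := Metric.uniformContinuous_iff.1
    ((periodic_deriv_comp_inv_add (Φ := Φ) θ).uniformContinuous_of_continuous one_pos
      (continuous_deriv_comp_inv_add hΦ θ)) _ hε3
  obtain ⟨δ, hδ, hlin⟩ := exists_abs_conj_addConst_sub_le hconj hΦ hε3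
  have hK : 0 < M + ε / 3 := by linarith [(abs_nonneg _).trans (hM 0)]
  have hq' : (0 : ℝ) < q := Nat.cast_pos.2 (Nat.pos_of_ne_zero hq0)
  refine ⟨min δ (ρ / (2 * q * (M + ε / 3))), by positivity, fun t ht => ?_⟩
  set g : CircleDeg1Lift := ↑Φ * f.addConst t * ↑Φ⁻¹
  have hlin' := hlin t (ht.trans (min_le_left _ _))
  have hstep : ∀ z, |g z - (z + θ)| ≤ (M + ε / 3) * |t| := fun z => by
    have := abs_sub_abs_le_abs_sub (g z - (z + θ)) (t * ψ z)
    rw [abs_mul] at this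
    nlinarith [hlin' z, hM (Φ⁻¹ (z + θ)), abs_nonneg t]
  have hψ : ∀ z z', |z - z'| ≤ q * ((M + ε / 3) * |t|) → |ψ z - ψ z'| ≤ ε / 3 := by
    have := ht.trans (min_le_right _ _)
    rw [le_div_iff₀ (by positivity)] at this
    refine fun z z' h => (hψρ ?_).le
    rw [Real.dist_eq]
    nlinarith
  have := abs_translationNumber_sub_le_of_near_rotation g hq0 hlin' hstep hψ
    (fun y => by simpa [Real.dist_eq, abs_sub_comm] using (hq y).le)
  rw [← translationNumber_conj_eq Φ, mul_comm c t]
  linarith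

end CircleDeg1Lift

theorem length_interval_littleO_of_C1_linearization_general
    (F : ℝ → ℝ)
    (hFmono : StrictMono F)
    (hFper : ∀ x : ℝ, F (x + 1) = F x + 1)
    -- translation numbers of the translated family `F_t = F + t`
    (T : ℝ → ℝ)
    (hT : ∀ t x : ℝ, Tendsto (fun n : ℕ => ((fun y => F y + t)^[n] x - x) / n)
      atTop (𝓝 (T t)))
    (θ : ℝ) (hθ : T 0 = θ) (hirr : Irrational θ)
    -- the linearizing map `Φ_F`, obtained as the limit of `(1/N) ∑_{k<N} (F^{∘k} - kθ)`
    (Φ : ℝ → ℝ)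
    (hΦmono : StrictMono Φ)
    (hΦper : ∀ x : ℝ, Φ (x + 1) = Φ x + 1)
    (hΦconj : ∀ x : ℝ, Φ (F x) = Φ x + θ)
    -- `Φ_F` is a `C¹` diffeomorphism of `ℝ`
    (hΦC1 : ContDiff ℝ 1 Φ)
    (hΦbij : Function.Bijective Φ)
    (hΦderiv : ∀ x : ℝ, deriv Φ x ≠ 0)
    -- continued fraction convergents `p_n/q_n` of `θ`
    (pn : ℕ → ℤ) (qn : ℕ → ℕ)
    (hqtend : Tendsto qn atTop atTop)
    (hconv : ∀ n, |θ - (pn n : ℝ) / (qn n : ℝ)| ≤ 1 / (qn n : ℝ) ^ 2)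
    -- the intervals `I(p_n/q_n)` and their lengths `ℓ_{p_n/q_n} = tmax n - tmin n`
    (tmin tmax : ℕ → ℝ) (hle : ∀ n, tmin n ≤ tmax n)
    (hI : ∀ n, {t : ℝ | T t = (pn n : ℝ) / (qn n : ℝ)} = Set.Icc (tmin n) (tmax n)) :
    (fun n => tmax n - tmin n) =o[atTop] (fun n => θ - (pn n : ℝ) / (qn n : ℝ))
    ∧ (fun n => tmax n - tmin n) =O[atTop] (fun n => 1 / (qn n : ℝ) ^ 2) := by
  set f : CircleDeg1Lift := ⟨⟨F, hFmono.monotone⟩, hFper⟩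
  have hΦunit : IsUnit (⟨⟨Φ, hΦmono.monotone⟩, hΦper⟩ : CircleDeg1Lift) :=
    CircleDeg1Lift.isUnit_iff_bijective.2 hΦbij
  have hTf : ∀ t, T t = τ (f.addConst t) := fun t => by
    have hft : ⇑(f.addConst t) = fun y => F y + t := by ext; simp [f]
    exact ((f.addConst t).translationNumber_eq_of_tendsto₀ (by simpa [hft] using hT t 0)).symm
  obtain ⟨m, hm, hlow⟩ := CircleDeg1Lift.exists_mul_abs_le_abs_translationNumber_addConst_sub
    (f := f) (Φ := hΦunit.unit) hΦconj hΦC1 hΦderiv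
  obtain ⟨c, hc⟩ := CircleDeg1Lift.exists_hasDerivAt_translationNumber_addConst
    (f := f) (Φ := hΦunit.unit) hΦconj hΦC1 hirr
  simp only [← hTf, ← hθ] at hlow hc
  have hends : ∀ n, T (tmin n) = (pn n : ℝ) / qn n ∧ T (tmax n) = (pn n : ℝ) / qn n :=
    fun n => by
      simpa only [← hI n, Set.mem_ofPred_eq] using
        And.intro (left_mem_Icc.2 (hle n)) (right_mem_Icc.2 (hle n))
  have hlittle := isLittleO_sub_of_apply_eq hc hm hlow
    (hθ ▸ tendsto_of_abs_sub_le_one_div_sq hqtend hconv) (fun n => (hends n).1)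
    (fun n => (hends n).2)
  rw [hθ] at hlittle
  exact ⟨hlittle, hlittle.isBigO.trans (isBigO_of_le _ fun n => (hconv n).trans (le_abs_self _))⟩

/-- Corollary of Herman's theorem: if the linearizing map `Φ_F` is a `C¹`
diffeomorphism of `ℝ`, then the lengths `ℓ_{p_n/q_n}` of the parameter intervals
`I(p_n/q_n)` satisfy `ℓ_{p_n/q_n} = o(θ - p_n/q_n) = O(1/q_n²)`. -/
theorem length_interval_littleO_of_C1_linearization
    (F : ℝ → ℝ)
    (hFanal : ∀ x : ℝ, AnalyticAt ℝ F x)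
    (hFmono : StrictMono F)
    (hFbij : Function.Bijective F)
    (hFderiv : ∀ x : ℝ, 0 < deriv F x)
    (hFper : ∀ x : ℝ, F (x + 1) = F x + 1)
    -- translation numbers of the translated family `F_t = F + t`
    (T : ℝ → ℝ)
    (hT : ∀ t x : ℝ, Tendsto (fun n : ℕ => ((fun y => F y + t)^[n] x - x) / n)
      atTop (𝓝 (T t)))
    (θ : ℝ) (hθ : T 0 = θ) (hirr : Irrational θ)
    -- the linearizing map `Φ_F`, obtained as the limit of `(1/N) ∑_{k<N} (F^{∘k} - kθ)`
    (Φ : ℝ → ℝ)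
    (hΦlim : ∀ x : ℝ, Tendsto
      (fun N : ℕ => (1 / (N : ℝ)) * ∑ k ∈ Finset.range N, (F^[k] x - (k : ℝ) * θ))
      atTop (𝓝 (Φ x)))
    (hΦmono : StrictMono Φ)
    (hΦper : ∀ x : ℝ, Φ (x + 1) = Φ x + 1)
    (hΦconj : ∀ x : ℝ, Φ (F x) = Φ x + θ)
    -- `Φ_F` is a `C¹` diffeomorphism of `ℝ`
    (hΦC1 : ContDiff ℝ 1 Φ)
    (hΦbij : Function.Bijective Φ)
    (hΦderiv : ∀ x : ℝ, deriv Φ x ≠ 0)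
    -- continued fraction convergents `p_n/q_n` of `θ`
    (pn : ℕ → ℤ) (qn : ℕ → ℕ)
    (hqpos : ∀ n, 0 < qn n)
    (hqtend : Tendsto qn atTop atTop)
    (hcop : ∀ n, Nat.Coprime (pn n).natAbs (qn n))
    (hconv : ∀ n, |θ - (pn n : ℝ) / (qn n : ℝ)| ≤ 1 / (qn n : ℝ) ^ 2)
    -- the intervals `I(p_n/q_n)` and their lengths `ℓ_{p_n/q_n} = tmax n - tmin n`
    (tmin tmax : ℕ → ℝ) (hle : ∀ n, tmin n ≤ tmax n)
    (hI : ∀ n, {t : ℝ | T t = (pn n : ℝ) / (qn n : ℝ)} = Set.Icc (tmin n) (tmax n)) :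
    (fun n => tmax n - tmin n) =o[atTop] (fun n => θ - (pn n : ℝ) / (qn n : ℝ))
    ∧ (fun n => tmax n - tmin n) =O[atTop] (fun n => 1 / (qn n : ℝ) ^ 2) :=
  length_interval_littleO_of_C1_linearization_general F hFmono hFper T hT θ hθ hirr Φ hΦmono hΦper
    hΦconj hΦC1 hΦbij hΦderiv pn qn hqtend hconv tmin tmax hle hI
end

section
/- Fix τ' < τ'' < τ and set S'' = Ψ_F(S(τ'')). Then sup_{z ∈ S''} |F^{∘q_n}(z) − z − p_n| → 0 as n → ∞. More precisely, with C₁ = max_{w ∈ cl(S(τ''))} |Ψ_F'(w)|, one has sup_{z ∈ S''} |F^{∘q_n}(z) − z − p_n| ≤ C₁/q_n. -/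
/-!
The linearising coordinate `Ψ` turns `Fc^[q]` into the translation by `qθ` and commutes with
integer translations, so on `Ψ(S(τ''))` the quantity `Fc^[q] z - z - p` equals
`Ψ(w + qθ) - Ψ(w + p)` for `z = Ψ w`. The two arguments lie on a horizontal segment inside
`S(τ'')` of length `|qθ - p| ≤ 1/q`, and the mean value inequality bounds the difference by `C₁/q`.
-/

open Filter Real Set Topology

/-- The open horizontal strip `S(τ) = {z ∈ ℂ : |Im z| < τ}`. -/
def Strip (τ : ℝ) : Set ℂ := {z : ℂ | |z.im| < τ}

@[simp]
lemma mem_strip {t : ℝ} {z : ℂ} : z ∈ Strip t ↔ |z.im| < t := Iff.rfl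

lemma strip_eq_preimage_Ioo (t : ℝ) : Strip t = Complex.im ⁻¹' Ioo (-t) t := by
  ext z
  simp [abs_lt]

lemma isOpen_strip (t : ℝ) : IsOpen (Strip t) := by
  rw [strip_eq_preimage_Ioo]
  exact isOpen_Ioo.preimage Complex.continuous_im

lemma convex_strip (t : ℝ) : Convex ℝ (Strip t) := by
  rw [strip_eq_preimage_Ioo]
  exact (convex_Ioo (-t) t).linear_preimage Complex.imLm

lemma strip_mono {s t : ℝ} (h : s ≤ t) : Strip s ⊆ Strip t :=
  fun _ hz => lt_of_lt_of_le hz h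

@[simp]
lemma add_ofReal_mem_strip {t : ℝ} {z : ℂ} (r : ℝ) : z + r ∈ Strip t ↔ z ∈ Strip t := by
  simp

@[simp]
lemma add_intCast_mem_strip {t : ℝ} {z : ℂ} (m : ℤ) : z + m ∈ Strip t ↔ z ∈ Strip t := by
  simp

lemma iterate_apply_eq_of_conj_add {α β : Type*} [AddMonoid α] {f : β → β} {g : α → β}
    {S : Set α} {c : α} (hS : ∀ z ∈ S, z + c ∈ S) (hconj : ∀ z ∈ S, f (g z) = g (z + c))
    (k : ℕ) {z : α} (hz : z ∈ S) : f^[k] (g z) = g (z + k • c) := by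
  induction k generalizing z with
  | zero => simp
  | succ k ih =>
    rw [Function.iterate_succ_apply, hconj z hz, ih (hS z hz), add_assoc, ← succ_nsmul']

lemma map_add_intCast_of_map_add_one {α β : Type*} [AddGroupWithOne α] [AddGroupWithOne β]
    {g : α → β} {S : Set α} (hS : ∀ z ∈ S, ∀ m : ℤ, z + m ∈ S)
    (hg : ∀ z ∈ S, g (z + 1) = g z + 1) (m : ℤ) {z : α} (hz : z ∈ S) :
    g (z + m) = g z + m := by
  induction m using Int.induction_on with
  | zero => simp
  | succ k ih =>
    have h := hg _ (hS z hz k)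
    simp only [Int.cast_add, Int.cast_one] at ih ⊢
    rw [← add_assoc, ← add_assoc, h, ih]
  | pred k ih =>
    have h := hg _ (hS z hz (-k - 1))
    rw [Int.cast_sub, Int.cast_one, ← add_sub_assoc, sub_add_cancel, ih] at h
    simp only [Int.cast_sub, Int.cast_one]
    rw [← add_sub_assoc, ← add_sub_assoc, eq_sub_of_add_eq h.symm]

lemma abs_mul_sub_le_inv_of_abs_sub_div_le {θ p q : ℝ} (hq : 0 < q)
    (h : |θ - p / q| ≤ 1 / q ^ 2) : |q * θ - p| ≤ 1 / q := by
  have hqθ : q * θ - p = q * (θ - p / q) := by field_simp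
  calc |q * θ - p| = q * |θ - p / q| := by rw [hqθ, abs_mul, abs_of_pos hq]
    _ ≤ q * (1 / q ^ 2) := by gcongr
    _ = 1 / q := by field_simp

lemma norm_sub_le_of_norm_deriv_le_on_strip {Ψ : ℂ → ℂ} {t C : ℝ}
    (hΨ : DifferentiableOn ℂ Ψ (Strip t)) (hC : ∀ w ∈ Strip t, ‖deriv Ψ w‖ ≤ C)
    {w : ℂ} (hw : w ∈ Strip t) (r : ℝ) : ‖Ψ (w + r) - Ψ w‖ ≤ C * |r| := by
  have hdiff : ∀ x ∈ Strip t, DifferentiableAt ℂ Ψ x :=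
    fun x hx => hΨ.differentiableAt ((isOpen_strip t).mem_nhds hx)
  have hbound : ∀ x ∈ Strip t, ‖fderiv ℂ Ψ x‖ ≤ C :=
    fun x hx => norm_deriv_eq_norm_fderiv (f := Ψ) ▸ hC x hx
  simpa [Complex.norm_real] using
    (convex_strip t).norm_image_sub_le_of_norm_fderiv_le hdiff hbound hw
      ((add_ofReal_mem_strip r).2 hw)

lemma tendstoUniformlyOn_zero_of_norm_le {ι α E : Type*} [SeminormedAddCommGroup E]
    {l : Filter ι} {f : ι → α → E} {s : Set α} {b : ι → ℝ} (hb : Tendsto b l (𝓝 0))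
    (hf : ∀ i, ∀ z ∈ s, ‖f i z‖ ≤ b i) : TendstoUniformlyOn f (fun _ => 0) l s := by
  rw [Metric.tendstoUniformlyOn_iff]
  intro ε hε
  filter_upwards [hb.eventually_lt_const hε] with i hi z hz
  simpa [dist_zero_left] using (hf i z hz).trans_lt hi

lemma norm_iterate_sub_sub_intCast_le {Ψ Fc : ℂ → ℂ} {θ t C : ℝ}
    (hΨ : DifferentiableOn ℂ Ψ (Strip t)) (hΨper : ∀ z ∈ Strip t, Ψ (z + 1) = Ψ z + 1)
    (hconj : ∀ z ∈ Strip t, Fc (Ψ z) = Ψ (z + θ)) (hC : ∀ w ∈ Strip t, ‖deriv Ψ w‖ ≤ C)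
    (q : ℕ) (p : ℤ) {w : ℂ} (hw : w ∈ Strip t) :
    ‖Fc^[q] (Ψ w) - Ψ w - p‖ ≤ C * |q * θ - p| := by
  have hiter : Fc^[q] (Ψ w) = Ψ (w + q • (θ : ℂ)) :=
    iterate_apply_eq_of_conj_add (fun z hz => (add_ofReal_mem_strip θ).2 hz) hconj q hw
  have hint : Ψ (w + p) = Ψ w + p :=
    map_add_intCast_of_map_add_one (fun z hz m => (add_intCast_mem_strip m).2 hz) hΨper p hw
  have hshift : w + q • (θ : ℂ) = w + p + ((q * θ - p : ℝ) : ℂ) := by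
    push_cast
    rw [nsmul_eq_mul]
    ring
  calc ‖Fc^[q] (Ψ w) - Ψ w - p‖ = ‖Ψ (w + p + ((q * θ - p : ℝ) : ℂ)) - Ψ (w + p)‖ := by
        rw [hiter, hshift, hint, sub_sub]
    _ ≤ C * |q * θ - p| :=
        norm_sub_le_of_norm_deriv_le_on_strip hΨ hC ((add_intCast_mem_strip p).2 hw) _

theorem sup_iterate_sub_translation_tendsto_zero_general
    (θ : ℝ)
    -- Herman strip of modulus `2τ`
    (τ : ℝ)
    (Ψ : ℂ → ℂ)
    (hΨdiff : DifferentiableOn ℂ Ψ (Strip τ))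
    (hΨper : ∀ z ∈ Strip τ, Ψ (z + 1) = Ψ z + 1)
    (Fc : ℂ → ℂ)
    (hFclin : ∀ z ∈ Strip τ, Fc (Ψ z) = Ψ (z + (θ : ℂ)))
    -- `τ' < τ'' < τ`
    (τ'' : ℝ) (hτ''τ : τ'' < τ)
    -- continued fraction convergents `p_n/q_n` of `θ`
    (pn : ℕ → ℤ) (qn : ℕ → ℕ)
    (hqpos : ∀ n, 0 < qn n)
    (hqtend : Tendsto qn atTop atTop)
    (hconv : ∀ n, |θ - (pn n : ℝ) / (qn n : ℝ)| ≤ 1 / (qn n : ℝ) ^ 2)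
    -- `C₁ = max_{w ∈ cl(S(τ''))} |Ψ_F'(w)|`
    (C₁ : ℝ) (hC₁ : ∀ w ∈ closure (Strip τ''), ‖deriv Ψ w‖ ≤ C₁) :
    (∀ n, ∀ z ∈ Ψ '' Strip τ'',
      ‖Fc^[qn n] z - z - ((pn n : ℤ) : ℂ)‖ ≤ C₁ / (qn n : ℝ))
    ∧ TendstoUniformlyOn (fun n z => Fc^[qn n] z - z - ((pn n : ℤ) : ℂ))
        (fun _ => 0) atTop (Ψ '' Strip τ'') := by
  have hsub : Strip τ'' ⊆ Strip τ := strip_mono hτ''τ.le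
  have hC₁' : ∀ w ∈ Strip τ'', ‖deriv Ψ w‖ ≤ C₁ := fun w hw => hC₁ w (subset_closure hw)
  have hbound : ∀ n, ∀ z ∈ Ψ '' Strip τ'',
      ‖Fc^[qn n] z - z - ((pn n : ℤ) : ℂ)‖ ≤ C₁ / (qn n : ℝ) := by
    rintro n _ ⟨w, hw, rfl⟩
    have hq : (0 : ℝ) < qn n := by exact_mod_cast hqpos n
    have hC₁_nonneg : 0 ≤ C₁ := (norm_nonneg _).trans (hC₁' w hw)
    calc ‖Fc^[qn n] (Ψ w) - Ψ w - ((pn n : ℤ) : ℂ)‖ ≤ C₁ * |qn n * θ - pn n| :=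
          norm_iterate_sub_sub_intCast_le (hΨdiff.mono hsub) (fun z hz => hΨper z (hsub hz))
            (fun z hz => hFclin z (hsub hz)) hC₁' (qn n) (pn n) hw
      _ ≤ C₁ * (1 / qn n) := by
          gcongr
          exact abs_mul_sub_le_inv_of_abs_sub_div_le hq (hconv n)
      _ = C₁ / qn n := mul_one_div C₁ _
  exact ⟨hbound, tendstoUniformlyOn_zero_of_norm_le
    (tendsto_const_nhds.div_atTop (tendsto_natCast_atTop_atTop.comp hqtend)) hbound⟩

/-- Lemma 2 of the paper: on `S'' = Ψ_F(S(τ''))` with `τ' < τ'' < τ`, one has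
`|F^{∘q_n}(z) - z - p_n| ≤ C₁/q_n` where `C₁` bounds `|Ψ_F'|` on the closure of
`S(τ'')`; in particular `sup_{z ∈ S''} |F^{∘q_n}(z) - z - p_n| → 0`. -/
theorem sup_iterate_sub_translation_tendsto_zero
    (F : ℝ → ℝ)
    (hFanal : ∀ x : ℝ, AnalyticAt ℝ F x)
    (hFmono : StrictMono F)
    (hFbij : Function.Bijective F)
    (hFderiv : ∀ x : ℝ, 0 < deriv F x)
    (hFper : ∀ x : ℝ, F (x + 1) = F x + 1)
    (θ : ℝ) (hirr : Irrational θ)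
    (hTrans : ∀ x : ℝ, Tendsto (fun n : ℕ => (F^[n] x - x) / n) atTop (𝓝 θ))
    -- Herman strip of modulus `2τ`
    (τ : ℝ) (hτ : 0 < τ)
    (Φ : ℝ → ℝ) (hΦmono : StrictMono Φ)
    (hΦper : ∀ x : ℝ, Φ (x + 1) = Φ x + 1)
    (hΦconj : ∀ x : ℝ, Φ (F x) = Φ x + θ)
    (Ψ : ℂ → ℂ)
    (hΨΦ : ∀ x : ℝ, Ψ ((Φ x : ℝ) : ℂ) = (x : ℂ))
    (hΨdiff : DifferentiableOn ℂ Ψ (Strip τ))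
    (hΨinj : Set.InjOn Ψ (Strip τ))
    (hΨper : ∀ z ∈ Strip τ, Ψ (z + 1) = Ψ z + 1)
    (Fc : ℂ → ℂ)
    (hFcreal : ∀ x : ℝ, Fc (x : ℂ) = ((F x : ℝ) : ℂ))
    (hFcdiff : DifferentiableOn ℂ Fc (Ψ '' Strip τ))
    (hFcper : ∀ z ∈ Ψ '' Strip τ, Fc (z + 1) = Fc z + 1)
    (hFclin : ∀ z ∈ Strip τ, Fc (Ψ z) = Ψ (z + (θ : ℂ)))
    -- `τ' < τ'' < τ`
    (τ' τ'' : ℝ) (hτ'pos : 0 < τ') (hτ'τ'' : τ' < τ'') (hτ''τ : τ'' < τ)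
    -- continued fraction convergents `p_n/q_n` of `θ`
    (pn : ℕ → ℤ) (qn : ℕ → ℕ)
    (hqpos : ∀ n, 0 < qn n)
    (hqtend : Tendsto qn atTop atTop)
    (hcop : ∀ n, Nat.Coprime (pn n).natAbs (qn n))
    (hconv : ∀ n, |θ - (pn n : ℝ) / (qn n : ℝ)| ≤ 1 / (qn n : ℝ) ^ 2)
    -- `C₁ = max_{w ∈ cl(S(τ''))} |Ψ_F'(w)|`
    (C₁ : ℝ) (hC₁ : ∀ w ∈ closure (Strip τ''), ‖deriv Ψ w‖ ≤ C₁) :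
    (∀ n, ∀ z ∈ Ψ '' Strip τ'',
      ‖Fc^[qn n] z - z - ((pn n : ℤ) : ℂ)‖ ≤ C₁ / (qn n : ℝ))
    ∧ TendstoUniformlyOn (fun n z => Fc^[qn n] z - z - ((pn n : ℤ) : ℂ))
        (fun _ => 0) atTop (Ψ '' Strip τ'') :=
  sup_iterate_sub_translation_tendsto_zero_general θ τ Ψ hΨdiff hΨper Fc hFclin τ'' hτ''τ pn qn
    hqpos hqtend hconv C₁ hC₁
end

section
/- Let τ' > 0, let p/q be a rational in lowest terms with q ≥ 1, and let a, b ∈ ℝ. Assume G is holomorphic and bounded on the strip S(τ') = {z ∈ ℂ : |Im z| < τ'}, is 1-periodic, and vanishes, counting multiplicities, on the two sets {a + k·p/q : k ∈ ℤ} and {b + k·p/q : k ∈ ℤ} (i.e., G(z)/(sin(πq(z−a))·sin(πq(z−b))) is holomorphic on S(τ')). Then max_{x∈ℝ}|G(x)| ≤ (sup_{z∈S(τ')}|G(z)|) / (sinh(πqτ'))². In particular max_{x∈ℝ}|G(x)| = O(sup_{z∈S(τ')}|G(z)| · e^{−2πqτ'}) as q → ∞. -/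
/-!
Write `P(z) = sin(πq(z-a)) sin(πq(z-b))`, so that `G = h P` with `h` holomorphic on the strip.
Since `|sin w| ≥ |sinh (Im w)|`, on the lines `Im z = ±t` we have `|P| ≥ sinh(πqt)²`, hence
`|h| ≤ sup |G| / sinh(πqt)²` there. Both `G` and `P` are `1`-periodic, so `h` is too; it is
therefore bounded on closed substrips, and the Phragmén–Lindelöf principle carries the bound on `h`
from the two lines to the real axis, where `|P| ≤ 1`. Finally let `t → τ'`.
-/

open Filter Real Set Topology

theorem Complex.norm_sin_sq (z : ℂ) :
    ‖Complex.sin z‖ ^ 2 = Real.sin z.re ^ 2 + Real.sinh z.im ^ 2 := by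
  rw [Complex.sin_eq, ← Complex.ofReal_sin, ← Complex.ofReal_cosh, ← Complex.ofReal_cos,
    ← Complex.ofReal_sinh, ← Complex.ofReal_mul, ← Complex.ofReal_mul, Complex.sq_norm,
    Complex.normSq_add_mul_I]
  linear_combination Real.sin z.re ^ 2 * Real.cosh_sq z.im +
    Real.sinh z.im ^ 2 * Real.sin_sq_add_cos_sq z.re

theorem Complex.abs_sinh_im_le_norm_sin (z : ℂ) : |Real.sinh z.im| ≤ ‖Complex.sin z‖ := by
  rw [← abs_norm]
  exact sq_le_sq.1 (by rw [Complex.norm_sin_sq]; exact le_add_of_nonneg_left (sq_nonneg _))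

noncomputable def sinMulSin (c a b : ℝ) (z : ℂ) : ℂ :=
  Complex.sin (c * (z - a)) * Complex.sin (c * (z - b))

theorem sinMulSin_periodic (q : ℕ) (a b : ℝ) : Function.Periodic (sinMulSin (π * q) a b) 1 := by
  intro z
  have hshift : ∀ d : ℝ, ((π * q : ℝ) : ℂ) * (z + 1 - d) = (π * q : ℝ) * (z - d) + q * π := by
    intro d; push_cast; ring
  have hsign : ((-1 : ℂ) ^ q) * (-1) ^ q = 1 := by rw [← pow_add, ← two_mul, pow_mul]; norm_num
  simp only [sinMulSin, hshift, Complex.sin_antiperiodic.add_nat_mul_eq]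
  linear_combination (Complex.sin ((π * q : ℝ) * (z - a)) * Complex.sin ((π * q : ℝ) * (z - b)))
    * hsign

theorem sinh_sq_le_norm_sinMulSin (c a b : ℝ) (z : ℂ) :
    Real.sinh (c * z.im) ^ 2 ≤ ‖sinMulSin c a b z‖ := by
  have him : ∀ d : ℝ, ((c : ℂ) * (z - d)).im = c * z.im := by simp
  rw [sinMulSin, norm_mul, ← sq_abs, sq]
  have ha := Complex.abs_sinh_im_le_norm_sin (c * (z - a))
  have hb := Complex.abs_sinh_im_le_norm_sin (c * (z - b))
  rw [him] at ha hb
  exact mul_le_mul ha hb (abs_nonneg _) (norm_nonneg _)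

theorem sinMulSin_ne_zero {c : ℝ} (hc : c ≠ 0) (a b : ℝ) {z : ℂ} (hz : z.im ≠ 0) :
    sinMulSin c a b z ≠ 0 := by
  have hs : Real.sinh (c * z.im) ≠ 0 := by simp [hc, hz]
  exact norm_pos_iff.1 ((by positivity : 0 < Real.sinh (c * z.im) ^ 2).trans_le
    (sinh_sq_le_norm_sinMulSin c a b z))

theorem norm_sinMulSin_ofReal_le_one (c a b x : ℝ) : ‖sinMulSin c a b x‖ ≤ 1 := by
  have hreal : ∀ d : ℝ, ‖Complex.sin (c * ((x : ℂ) - d))‖ ≤ 1 := fun d => by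
    rw [← Complex.ofReal_sub, ← Complex.ofReal_mul, ← Complex.ofReal_sin, Complex.norm_real,
      Real.norm_eq_abs]
    exact abs_sin_le_one _
  rw [sinMulSin, norm_mul]
  exact mul_le_one₀ (hreal a) (norm_nonneg _) (hreal b)

theorem isOpen_strip_s9 (τ : ℝ) : IsOpen {z : ℂ | |z.im| < τ} :=
  isOpen_lt (continuous_abs.comp Complex.continuous_im) continuous_const

theorem convex_strip_s9 (τ : ℝ) : Convex ℝ {z : ℂ | |z.im| < τ} := by
  have : {z : ℂ | |z.im| < τ} = Complex.imLm ⁻¹' Ioo (-τ) τ := by ext z; simp [abs_lt]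
  exact this ▸ (convex_Ioo _ _).linear_preimage _

section strip

variable {τ : ℝ}

theorem map_add_intCast_of_periodicOn_strip {α : Type*} {f : ℂ → α}
    (hf : ∀ z ∈ {z : ℂ | |z.im| < τ}, f (z + 1) = f z) (n : ℤ) {z : ℂ}
    (hz : z ∈ {z : ℂ | |z.im| < τ}) : f (z + n) = f z := by
  have hmem : ∀ m : ℤ, z + m ∈ {z : ℂ | |z.im| < τ} := fun m => by simpa using hz
  induction n using Int.induction_on with
  | zero => simp
  | succ n ih => rw [Int.cast_add, Int.cast_one, ← add_assoc, hf _ (hmem n), ih]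
  | pred n ih =>
    rw [← ih, show z + ((-n : ℤ) : ℂ) = z + ((-n - 1 : ℤ) : ℂ) + 1 by push_cast; ring]
    exact (hf _ (hmem _)).symm

theorem exists_bound_of_periodicOn_strip {E : Type*} [NormedAddCommGroup E] {f : ℂ → E}
    (hf : ContinuousOn f {z : ℂ | |z.im| < τ})
    (hper : ∀ z ∈ {z : ℂ | |z.im| < τ}, f (z + 1) = f z) {t : ℝ} (ht : t < τ) :
    ∃ C, ∀ z : ℂ, |z.im| ≤ t → ‖f z‖ ≤ C := by
  set K := Icc (0 : ℝ) 1 ×ℂ Icc (-t) t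
  have hKS : K ⊆ {z : ℂ | |z.im| < τ} := fun z hz => (abs_le.2 hz.2).trans_lt ht
  obtain ⟨C, hC⟩ := (isCompact_Icc.reProdIm isCompact_Icc).exists_bound_of_continuousOn
    (hf.mono hKS)
  refine ⟨C, fun z hz => ?_⟩
  have hwK : z - (⌊z.re⌋ : ℤ) ∈ K := by
    refine ⟨?_, abs_le.1 (by simpa using hz)⟩
    rw [mem_preimage, Complex.sub_re, Complex.intCast_re]
    exact ⟨sub_nonneg.2 (Int.floor_le _), by linarith [Int.lt_floor_add_one z.re]⟩
  have hzw := map_add_intCast_of_periodicOn_strip hper ⌊z.re⌋ (hKS hwK)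
  rw [sub_add_cancel] at hzw
  exact hzw ▸ hC _ hwK

/-- `h = G / P` is `1`-periodic off the real axis, and analytic continuation does the rest. -/
theorem periodicOn_strip_of_mul_eq (hτ : 0 < τ) {G h P : ℂ → ℂ}
    (hh : DifferentiableOn ℂ h {z : ℂ | |z.im| < τ})
    (hG : ∀ z ∈ {z : ℂ | |z.im| < τ}, G (z + 1) = G z)
    (hP : Function.Periodic P 1) (hP0 : ∀ z : ℂ, z.im ≠ 0 → P z ≠ 0)
    (hGh : ∀ z ∈ {z : ℂ | |z.im| < τ}, G z = h z * P z) :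
    ∀ z ∈ {z : ℂ | |z.im| < τ}, h (z + 1) = h z := by
  have hshift : ∀ z ∈ {z : ℂ | |z.im| < τ}, z + 1 ∈ {z : ℂ | |z.im| < τ} :=
    fun z hz => by simpa using hz
  have hz₀ : ((τ / 2 : ℝ) : ℂ) * Complex.I ∈ {z : ℂ | |z.im| < τ} := by
    simp [abs_of_pos (half_pos hτ), half_lt_self hτ]
  have hupper :
      {z : ℂ | 0 < z.im} ∩ {z : ℂ | |z.im| < τ} ∈ 𝓝 (((τ / 2 : ℝ) : ℂ) * Complex.I) :=
    ((isOpen_lt continuous_const Complex.continuous_im).inter (isOpen_strip_s9 τ)).mem_nhds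
      ⟨by simp [hτ], hz₀⟩
  refine ((hh.comp (differentiable_id.add_const 1).differentiableOn hshift).analyticOnNhd
    (isOpen_strip_s9 τ)).eqOn_of_preconnected_of_eventuallyEq (hh.analyticOnNhd (isOpen_strip_s9 τ))
    (convex_strip_s9 τ).isPreconnected hz₀ ?_
  filter_upwards [hupper] with z ⟨him, hz⟩
  refine mul_right_cancel₀ (hP0 z him.ne') ?_
  rw [Function.comp_apply, id, ← hP z, ← hGh _ (hshift z hz), hG z hz, hGh z hz, hP z]

end strip

theorem norm_le_of_bounded_on_horizontal_strip {E : Type*} [NormedAddCommGroup E]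
    [NormedSpace ℂ E] {f : ℂ → E} {a b C C₀ : ℝ}
    (hfd : DiffContOnCl ℂ f (Complex.im ⁻¹' Ioo a b))
    (hbdd : ∀ z ∈ Complex.im ⁻¹' Ioo a b, ‖f z‖ ≤ C₀)
    (hle_a : ∀ z : ℂ, z.im = a → ‖f z‖ ≤ C) (hle_b : ∀ z : ℂ, z.im = b → ‖f z‖ ≤ C)
    {z : ℂ} (hza : a ≤ z.im) (hzb : z.im ≤ b) : ‖f z‖ ≤ C := by
  refine PhragmenLindelof.horizontal_strip hfd ⟨π / (b - a) - 1, by linarith, 0, ?_⟩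
    hle_a hle_b hza hzb
  refine Asymptotics.IsBigO.of_bound C₀ (eventually_inf_principal.2 (Eventually.of_forall ?_))
  intro z hz
  simpa using hbdd z hz

theorem norm_le_div_sinh_sq_of_mul_sinMulSin {G h : ℂ → ℂ} {c a b τ t M : ℝ} (hc : c ≠ 0)
    (ht : 0 < t) (htτ : t < τ) (hh : DifferentiableOn ℂ h {z : ℂ | |z.im| < τ})
    (hper : ∀ z ∈ {z : ℂ | |z.im| < τ}, h (z + 1) = h z)
    (hGh : ∀ z ∈ {z : ℂ | |z.im| < τ}, G z = h z * sinMulSin c a b z)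
    (hM : ∀ z ∈ {z : ℂ | |z.im| < τ}, ‖G z‖ ≤ M) (x : ℝ) :
    ‖G x‖ ≤ M / Real.sinh (c * t) ^ 2 := by
  have hsub : ∀ z : ℂ, |z.im| ≤ t → z ∈ {z : ℂ | |z.im| < τ} := fun z hz => hz.trans_lt htτ
  have hs : 0 < Real.sinh (c * t) ^ 2 := by
    have : Real.sinh (c * t) ≠ 0 := by simp [hc, ht.ne']
    positivity
  have hline : ∀ w : ℂ, |w.im| = t → ‖h w‖ ≤ M / Real.sinh (c * t) ^ 2 := by
    intro w hw
    have hsinh : Real.sinh (c * t) ^ 2 = Real.sinh (c * w.im) ^ 2 := by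
      rcases abs_eq ht.le |>.1 hw with hw' | hw' <;> simp [hw', Real.sinh_neg]
    rw [le_div_iff₀ hs]
    calc ‖h w‖ * Real.sinh (c * t) ^ 2 ≤ ‖h w‖ * ‖sinMulSin c a b w‖ := by
          rw [hsinh]; gcongr; exact sinh_sq_le_norm_sinMulSin c a b w
      _ = ‖G w‖ := by rw [hGh w (hsub w hw.le), norm_mul]
      _ ≤ M := hM w (hsub w hw.le)
  obtain ⟨C₀, hC₀⟩ := exists_bound_of_periodicOn_strip hh.continuousOn hper htτ
  have hdiff : DiffContOnCl ℂ h (Complex.im ⁻¹' Ioo (-t) t) := by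
    refine (hh.mono ?_).diffContOnCl
    rw [Complex.closure_preimage_im, closure_Ioo (by linarith)]
    exact fun z hz => hsub z (abs_le.2 hz)
  have hx : ‖h x‖ ≤ M / Real.sinh (c * t) ^ 2 :=
    norm_le_of_bounded_on_horizontal_strip hdiff
      (fun z hz => hC₀ z (abs_le.2 ⟨hz.1.le, hz.2.le⟩))
      (fun w hw => hline w (by rw [hw, abs_neg, abs_of_pos ht]))
      (fun w hw => hline w (by rw [hw, abs_of_pos ht])) (by simp [ht.le]) (by simp [ht.le])
  calc ‖G x‖ = ‖h x‖ * ‖sinMulSin c a b x‖ := by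
        rw [hGh x (hsub x (by simp [ht.le])), norm_mul]
    _ ≤ ‖h x‖ := mul_le_of_le_one_right (norm_nonneg _) (norm_sinMulSin_ofReal_le_one c a b x)
    _ ≤ M / Real.sinh (c * t) ^ 2 := hx

theorem le_of_forall_Ioo_le_of_continuousAt {f : ℝ → ℝ} {a b y : ℝ} (hab : a < b)
    (hf : ContinuousAt f b) (h : ∀ t ∈ Ioo a b, y ≤ f t) : y ≤ f b :=
  ge_of_tendsto (hf.tendsto.mono_left nhdsWithin_le_nhds)
    (eventually_of_mem (Ioo_mem_nhdsLT hab) h)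

theorem exp_div_four_le_sinh {t : ℝ} (ht : log 2 ≤ 2 * t) : exp t / 4 ≤ Real.sinh t := by
  have h2 : 2 ≤ exp t * exp t := by
    rw [← exp_add, ← two_mul, ← log_le_iff_le_exp two_pos]; exact ht
  have hneg : exp (-t) * 2 ≤ exp t :=
    calc exp (-t) * 2 ≤ exp (-t) * (exp t * exp t) := by gcongr
      _ = exp t := by rw [← mul_assoc, ← exp_add, neg_add_cancel, exp_zero, one_mul]
  rw [Real.sinh_eq]
  linarith

theorem div_sinh_sq_le_mul_exp {M t : ℝ} (hM : 0 ≤ M) (ht : log 2 ≤ 2 * t) :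
    M / Real.sinh t ^ 2 ≤ 16 * M * exp (-2 * t) := by
  have hsinh := exp_div_four_le_sinh ht
  calc M / Real.sinh t ^ 2 ≤ M / (exp t / 4) ^ 2 := by gcongr
    _ = 16 * M * exp (-2 * t) := by
      rw [show -2 * t = -(t + t) by ring, exp_neg, exp_add]
      field_simp
      ring

theorem sup_on_real_le_sup_on_strip_div_sinh_sq_general
    (τ' : ℝ) (hτ' : 0 < τ')
    (q : ℕ) (hq : 1 ≤ q)
    (a b : ℝ) (G : ℂ → ℂ)
    (hGbdd : BddAbove ((fun z => ‖G z‖) '' {z : ℂ | |z.im| < τ'}))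
    (hGper : ∀ z ∈ {z : ℂ | |z.im| < τ'}, G (z + 1) = G z)
    (hvanish : ∃ h : ℂ → ℂ, DifferentiableOn ℂ h {z : ℂ | |z.im| < τ'} ∧
      ∀ z ∈ {z : ℂ | |z.im| < τ'},
        G z = h z * (Complex.sin ((π : ℂ) * (q : ℂ) * (z - (a : ℂ))) *
          Complex.sin ((π : ℂ) * (q : ℂ) * (z - (b : ℂ))))) :
    (∀ x : ℝ, ‖G (x : ℂ)‖ ≤
      sSup ((fun z => ‖G z‖) '' {z : ℂ | |z.im| < τ'}) / (Real.sinh (π * q * τ')) ^ 2)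
    ∧ (Real.sqrt (Real.log 2) < π * q * τ' →
        ∀ x : ℝ, ‖G (x : ℂ)‖ ≤
          16 * sSup ((fun z => ‖G z‖) '' {z : ℂ | |z.im| < τ'}) *
            Real.exp (-2 * π * q * τ')) := by
  obtain ⟨h, hh, hGh⟩ := hvanish
  set M := sSup ((fun z => ‖G z‖) '' {z : ℂ | |z.im| < τ'})
  have hM : ∀ z ∈ {z : ℂ | |z.im| < τ'}, ‖G z‖ ≤ M := fun z hz => le_csSup hGbdd ⟨z, hz, rfl⟩
  have hc : 0 < π * q := mul_pos pi_pos (Nat.cast_pos.2 hq)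
  have hGP : ∀ z ∈ {z : ℂ | |z.im| < τ'}, G z = h z * sinMulSin (π * q) a b z := by
    simpa only [sinMulSin, Complex.ofReal_mul, Complex.ofReal_natCast] using hGh
  have hper := periodicOn_strip_of_mul_eq hτ' hh hGper (sinMulSin_periodic q a b)
    (fun _ => sinMulSin_ne_zero hc.ne' a b) hGP
  have hbound : ∀ x : ℝ, ‖G x‖ ≤ M / Real.sinh (π * q * τ') ^ 2 := fun x =>
    le_of_forall_Ioo_le_of_continuousAt (f := fun t => M / Real.sinh (π * q * t) ^ 2) hτ'
      (continuousAt_const.div (by fun_prop) (pow_pos (sinh_pos_iff.2 (by positivity)) 2).ne')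
      fun t ht => norm_le_div_sinh_sq_of_mul_sinMulSin hc.ne' ht.1 ht.2 hh hper hGP hM x
  refine ⟨hbound, fun hlarge x => (hbound x).trans ?_⟩
  have hM0 : 0 ≤ M := (norm_nonneg _).trans (hM 0 (by simpa using hτ'))
  have hlog : log 2 ≤ 2 * (π * q * τ') := by
    have := le_sqrt_self_iff.2 (log_two_lt_d9.le.trans (by norm_num))
    linarith [sqrt_nonneg (log 2)]
  simpa only [mul_assoc] using div_sinh_sq_le_mul_exp hM0 hlog

/-- Lemma 6 of the paper: if `G` is holomorphic, bounded and `1`-periodic on the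
strip `S(τ') = {|Im z| < τ'}` and vanishes, counting multiplicities, on the two
sets `{a + k p/q : k ∈ ℤ}` and `{b + k p/q : k ∈ ℤ}` (in the sense that
`G(z) / (sin(πq(z-a)) sin(πq(z-b)))` is holomorphic on `S(τ')`), then
`max_{x ∈ ℝ} |G(x)| ≤ sup_{S(τ')} |G| / sinh(πqτ')²`; in particular, when
`πqτ' > √(log 2)` one gets the bound `16 · sup_{S(τ')} |G| · e^{-2πqτ'}`. -/
theorem sup_on_real_le_sup_on_strip_div_sinh_sq
    (τ' : ℝ) (hτ' : 0 < τ')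
    (p : ℤ) (q : ℕ) (hq : 1 ≤ q) (hcop : Nat.Coprime p.natAbs q)
    (a b : ℝ) (G : ℂ → ℂ)
    (hGdiff : DifferentiableOn ℂ G {z : ℂ | |z.im| < τ'})
    (hGbdd : BddAbove ((fun z => ‖G z‖) '' {z : ℂ | |z.im| < τ'}))
    (hGper : ∀ z ∈ {z : ℂ | |z.im| < τ'}, G (z + 1) = G z)
    (hvanish : ∃ h : ℂ → ℂ, DifferentiableOn ℂ h {z : ℂ | |z.im| < τ'} ∧
      ∀ z ∈ {z : ℂ | |z.im| < τ'},
        G z = h z * (Complex.sin ((π : ℂ) * (q : ℂ) * (z - (a : ℂ))) *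
          Complex.sin ((π : ℂ) * (q : ℂ) * (z - (b : ℂ))))) :
    (∀ x : ℝ, ‖G (x : ℂ)‖ ≤
      sSup ((fun z => ‖G z‖) '' {z : ℂ | |z.im| < τ'}) / (Real.sinh (π * q * τ')) ^ 2)
    ∧ (Real.sqrt (Real.log 2) < π * q * τ' →
        ∀ x : ℝ, ‖G (x : ℂ)‖ ≤
          16 * sSup ((fun z => ‖G z‖) '' {z : ℂ | |z.im| < τ'}) *
            Real.exp (-2 * π * q * τ')) :=
  sup_on_real_le_sup_on_strip_div_sinh_sq_general τ' hτ' q hq a b G hGbdd hGper hvanish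
end

section
/- Suppose Trans(F) = p/q with p, q coprime, q ≥ 1, and set G = F^{∘q} − Id − p. Then either G has a multiple real zero (some x with G(x) = 0 and G'(x) = 0), or there exist points x, y ∈ ℝ with G(x) = 0, G'(x) > 0 and G(y) = 0, G'(y) < 0. In other words, counting multiplicities, the induced circle diffeomorphism has at least 2 cycles with rotation number p/q. -/
/-!
Poincaré's theorem gives a zero `a` of `G`, and `G` is `1`-periodic, so `a + 1` is a zero as well.
Between two zeros of a continuous function a transverse zero is always followed by one of the
opposite sign or by a multiple one: if `G' a > 0` then `G` is positive just to the right of `a`,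
and at the first zero `b` of `G` after such a point, `G` comes down from positive values, which
rules out `G' b > 0`.
-/

open Filter Real Set Topology

section ZerosOfRealFunctions

variable {G : ℝ → ℝ} {a b c : ℝ}

lemma eventually_pos_nhdsGT_of_deriv_pos (ha : G a = 0) (hd : 0 < deriv G a) :
    ∀ᶠ x in 𝓝[>] a, 0 < G x := by
  filter_upwards [nhdsWithin_le_nhds (eventually_nhdsWithin_sign_eq_of_deriv_pos hd ha),
    self_mem_nhdsWithin] with x hsign (hx : a < x)
  rwa [sign_pos (sub_pos.2 hx), sign_eq_one_iff] at hsign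

lemma eventually_neg_nhdsLT_of_deriv_pos (ha : G a = 0) (hd : 0 < deriv G a) :
    ∀ᶠ x in 𝓝[<] a, G x < 0 := by
  filter_upwards [nhdsWithin_le_nhds (eventually_nhdsWithin_sign_eq_of_deriv_pos hd ha),
    self_mem_nhdsWithin] with x hsign (hx : x < a)
  rwa [sign_neg (sub_neg.2 hx), sign_eq_neg_one_iff] at hsign

lemma exists_mem_Ioo_pos_of_deriv_pos (hac : a < c) (ha : G a = 0) (hd : 0 < deriv G a) :
    ∃ x ∈ Ioo a c, 0 < G x :=
  ((eventually_pos_nhdsGT_of_deriv_pos ha hd).and (Ioo_mem_nhdsGT hac)).exists.imp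
    fun _ h => ⟨h.2, h.1⟩

/-- The inequality also covers the case where `G` is not differentiable at `b`, as then
`deriv G b = 0`. -/
lemma deriv_nonpos_of_pos_on_Ioo (hcb : c < b) (hb : G b = 0) (hpos : ∀ x ∈ Ioo c b, 0 < G x) :
    deriv G b ≤ 0 := by
  by_contra! hd
  obtain ⟨x, hGx, hx⟩ :=
    ((eventually_neg_nhdsLT_of_deriv_pos hb hd).and (Ioo_mem_nhdsLT hcb)).exists
  exact (hpos x hx).not_gt hGx

lemma exists_first_zero_of_pos_of_nonpos (hG : ContinuousOn G (Icc a c)) (hac : a ≤ c)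
    (ha : 0 < G a) (hc : G c ≤ 0) :
    ∃ b ∈ Ioc a c, G b = 0 ∧ ∀ x ∈ Ico a b, 0 < G x := by
  set S := Icc a c ∩ G ⁻¹' {0}
  have exists_zero_le : ∀ x ∈ Icc a c, G x ≤ 0 → ∃ z ∈ S, z ≤ x := fun x hx hGx => by
    obtain ⟨z, hz, hGz⟩ := intermediate_value_Icc' hx.1 (hG.mono (Icc_subset_Icc le_rfl hx.2))
      ⟨hGx, ha.le⟩
    exact ⟨z, ⟨⟨hz.1, hz.2.trans hx.2⟩, hGz⟩, hz.2⟩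
  have hSne : S.Nonempty := (exists_zero_le c ⟨hac, le_rfl⟩ hc).imp fun _ h => h.1
  have hSbdd : BddBelow S := ⟨a, fun _ hx => hx.1.1⟩
  have hbS : sInf S ∈ S :=
    (hG.preimage_isClosed_of_isClosed isClosed_Icc isClosed_singleton).csInf_mem hSne hSbdd
  refine ⟨sInf S, ⟨hbS.1.1.lt_of_ne fun h => ha.ne' (h ▸ hbS.2), hbS.1.2⟩, hbS.2,
    fun x hx => ?_⟩
  by_contra! hGx
  obtain ⟨z, hzS, hzx⟩ := exists_zero_le x ⟨hx.1, hx.2.le.trans hbS.1.2⟩ hGx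
  exact (csInf_le hSbdd hzS).not_gt (hzx.trans_lt hx.2)

lemma exists_zero_deriv_nonpos_of_deriv_pos (hG : ContinuousOn G (Icc a c)) (hac : a < c)
    (ha : G a = 0) (hc : G c = 0) (hd : 0 < deriv G a) :
    ∃ b ∈ Ioc a c, G b = 0 ∧ deriv G b ≤ 0 := by
  obtain ⟨x, hx, hGx⟩ := exists_mem_Ioo_pos_of_deriv_pos hac ha hd
  obtain ⟨b, hb, hGb, hpos⟩ := exists_first_zero_of_pos_of_nonpos
    (hG.mono (Icc_subset_Icc hx.1.le le_rfl)) hx.2.le hGx hc.le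
  exact ⟨b, ⟨hx.1.trans hb.1, hb.2⟩, hGb,
    deriv_nonpos_of_pos_on_Ioo hb.1 hGb fun y hy => hpos y ⟨hy.1.le, hy.2⟩⟩

lemma exists_zero_deriv_nonneg_of_deriv_neg (hG : ContinuousOn G (Icc a c)) (hac : a < c)
    (ha : G a = 0) (hc : G c = 0) (hd : deriv G a < 0) :
    ∃ b ∈ Ioc a c, G b = 0 ∧ 0 ≤ deriv G b := by
  obtain ⟨b, hb, hGb, hdb⟩ := exists_zero_deriv_nonpos_of_deriv_pos hG.neg hac
    (by simp [ha]) (by simp [hc]) (by rw [deriv.neg]; linarith)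
  rw [deriv.neg, neg_nonpos] at hdb
  exact ⟨b, hb, neg_eq_zero.1 hGb, hdb⟩

theorem exists_deriv_eq_zero_or_exists_deriv_pos_and_neg_of_zeros
    (hG : ContinuousOn G (Icc a c)) (hac : a < c) (ha : G a = 0) (hc : G c = 0) :
    (∃ x, G x = 0 ∧ deriv G x = 0) ∨
      ∃ x y, G x = 0 ∧ 0 < deriv G x ∧ G y = 0 ∧ deriv G y < 0 := by
  rcases lt_trichotomy (deriv G a) 0 with hneg | hzero | hpos
  · obtain ⟨b, -, hGb, hdb⟩ := exists_zero_deriv_nonneg_of_deriv_neg hG hac ha hc hneg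
    rcases hdb.eq_or_lt with hdb | hdb
    · exact .inl ⟨b, hGb, hdb.symm⟩
    · exact .inr ⟨b, a, hGb, hdb, ha, hneg⟩
  · exact .inl ⟨a, ha, hzero⟩
  · obtain ⟨b, -, hGb, hdb⟩ := exists_zero_deriv_nonpos_of_deriv_pos hG hac ha hc hpos
    rcases hdb.eq_or_lt with hdb | hdb
    · exact .inl ⟨b, hGb, hdb⟩
    · exact .inr ⟨a, b, ha, hpos, hGb, hdb⟩

end ZerosOfRealFunctions

lemma exists_iterate_eq_add_of_tendsto_div {F : ℝ → ℝ} (hFcont : Continuous F)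
    (hFmono : Monotone F) (hFper : ∀ x, F (x + 1) = F x + 1) {p : ℤ} {q : ℕ} (hq : 0 < q)
    {x₀ : ℝ} (hTrans : Tendsto (fun n : ℕ => (F^[n] x₀ - x₀) / n) atTop (𝓝 (p / q))) :
    ∃ a, F^[q] a = a + p := by
  let f : CircleDeg1Lift := ⟨⟨F, hFmono⟩, hFper⟩
  have hf : ⇑f = F := rfl
  have hτ : f.translationNumber = p / q := by
    refine tendsto_nhds_unique ?_ hTrans
    simpa only [CircleDeg1Lift.coe_pow, hf] using f.tendsto_translationNumber x₀
  simpa only [CircleDeg1Lift.coe_pow, hf] using (f.translationNumber_eq_rat_iff hFcont hq).1 hτ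

theorem two_cycles_of_rational_translation_number_general
    (F : ℝ → ℝ)
    (hFanal : ∀ x : ℝ, AnalyticAt ℝ F x)
    (hFmono : StrictMono F)
    (hFper : ∀ x : ℝ, F (x + 1) = F x + 1)
    (p : ℤ) (q : ℕ) (hq : 1 ≤ q)
    -- the translation number of `F` is `p/q`
    (hTrans : ∀ x : ℝ, Tendsto (fun n : ℕ => (F^[n] x - x) / n) atTop
      (𝓝 ((p : ℝ) / (q : ℝ))))
    (G : ℝ → ℝ) (hG : G = fun x => F^[q] x - x - (p : ℝ)) :
    (∃ x : ℝ, G x = 0 ∧ deriv G x = 0) ∨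
      (∃ x y : ℝ, G x = 0 ∧ 0 < deriv G x ∧ G y = 0 ∧ deriv G y < 0) := by
  have hFcont : Continuous F := continuous_iff_continuousAt.2 fun x => (hFanal x).continuousAt
  obtain ⟨a, ha⟩ := exists_iterate_eq_add_of_tendsto_div hFcont hFmono.monotone hFper hq
    (hTrans 0)
  have ha1 : F^[q] (a + 1) = F^[q] a + 1 := Function.Commute.iterate_left hFper q a
  subst hG
  exact exists_deriv_eq_zero_or_exists_deriv_pos_and_neg_of_zeros
    (((hFcont.iterate q).sub continuous_id).sub continuous_const).continuousOn
    (lt_add_one a) (by simp [ha]) (by simp only [ha1, ha]; ring)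

/-- If the translation number of `F` is `p/q`, then for `G = F^{∘q} - Id - p`,
either `G` has a multiple real zero, or `G` vanishes at least once with positive
derivative and once with negative derivative.  In other words, counting
multiplicities, the induced circle diffeomorphism has at least two cycles with
rotation number `p/q`. -/
theorem two_cycles_of_rational_translation_number
    (F : ℝ → ℝ)
    (hFanal : ∀ x : ℝ, AnalyticAt ℝ F x)
    (hFmono : StrictMono F)
    (hFbij : Function.Bijective F)
    (hFderiv : ∀ x : ℝ, 0 < deriv F x)
    (hFper : ∀ x : ℝ, F (x + 1) = F x + 1)
    (p : ℤ) (q : ℕ) (hq : 1 ≤ q) (hcop : Nat.Coprime p.natAbs q)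
    -- the translation number of `F` is `p/q`
    (hTrans : ∀ x : ℝ, Tendsto (fun n : ℕ => (F^[n] x - x) / n) atTop
      (𝓝 ((p : ℝ) / (q : ℝ))))
    (G : ℝ → ℝ) (hG : G = fun x => F^[q] x - x - (p : ℝ)) :
    (∃ x : ℝ, G x = 0 ∧ deriv G x = 0) ∨
      (∃ x y : ℝ, G x = 0 ∧ 0 < deriv G x ∧ G y = 0 ∧ deriv G y < 0) :=
  two_cycles_of_rational_translation_number_general F hFanal hFmono hFper p q hq hTrans G hG
end
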